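/- arXiv:1906.02803 — 6 statements merged into one kernel-verified Lean document; each statement's English description precedes it below -/
import Mathlib

section
/- Let g(T) ∈ K[T] be monic, irreducible, and separable with root a ∈ K^sep, and let L ⊇ K be a finite separable extension with h(T) ∈ L[T] monic. If g(T) = Nm_{L|K} h(T), then there exists a K-embedding σ : L → K(a) such that (σh)(T) is the minimal polynomial of a over σ(L). -/
open Polynomial IntermediateField

set_option synthInstance.maxHeartbeats 400000

noncomputable def algHomToFieldRange {K L E : Type*} [Field K] [Field L] [Field E]
    [Algebra K L] [Algebra K E] (σ : L →ₐ[K] E) : L →ₐ[K] σ.fieldRange where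
  toFun x := ⟨σ x, ⟨x, rfl⟩⟩
  map_one' := Subtype.ext (map_one σ)
  map_mul' x y := Subtype.ext (map_mul σ x y)
  map_zero' := Subtype.ext (map_zero σ)
  map_add' x y := Subtype.ext (map_add σ x y)
  commutes' r := Subtype.ext (σ.commutes r)

theorem algHomToFieldRange_bijective {K L E : Type*} [Field K] [Field L] [Field E]
    [Algebra K L] [Algebra K E] (σ : L →ₐ[K] E) :
    Function.Bijective (algHomToFieldRange σ) := by
  constructor
  · intro x y hxy
    exact σ.toRingHom.injective (congrArg Subtype.val hxy)
  · rintro ⟨y, x, rfl⟩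
    exact ⟨x, rfl⟩

set_option maxHeartbeats 1000000 in
/-- Let `g(T) ∈ K[T]` be monic, irreducible, and separable with root
`a ∈ K^sep`, and let `L ⊇ K` be a finite separable extension with `h(T) ∈ L[T]` monic.
If `g(T) = Nm_{L|K} h(T)`, then there exists a `K`-embedding `σ : L → K(a)` such that
`(σh)(T)` is the minimal polynomial of `a` over `σ(L)`. -/
theorem exists_embedding_of_norm_eq
    (K L : Type*) [Field K] [Field L] [Algebra K L]
    [FiniteDimensional K L] [Algebra.IsSeparable K L]
    (g : Polynomial K) (hmonic : g.Monic) (hirr : Irreducible g) (hsep : g.Separable)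
    (a : SeparableClosure K) (hroot : Polynomial.aeval a g = 0)
    (h : Polynomial L) (hhm : h.Monic)
    (hnorm : g.map (algebraMap K (SeparableClosure K)) =
        ∏ v : L →ₐ[K] SeparableClosure K, h.map v.toRingHom) :
    ∃ σ : L →ₐ[K] SeparableClosure K,
      (σ.fieldRange : IntermediateField K (SeparableClosure K)) ≤ K⟮a⟯ ∧
      (minpoly (↥σ.fieldRange) a).map
          (algebraMap (↥σ.fieldRange) (SeparableClosure K)) =
        h.map σ.toRingHom := by
  classical
  have hEval : ∏ v : L →ₐ[K] (SeparableClosure K), (h.map v.toRingHom).eval a = 0 := by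
    rw [← eval_prod, ← hnorm, eval_map, ← aeval_def, hroot]
  obtain ⟨σ, -, hσ⟩ := Finset.prod_eq_zero_iff.mp hEval
  refine ⟨σ, ?_⟩
  set F := σ.fieldRange with hF
  let σ' : L →ₐ[K] ↥F := algHomToFieldRange σ
  let h' : Polynomial ↥F := h.map σ'.toRingHom
  have hh'm : h'.Monic := hhm.map _
  have hh'map : h'.map (algebraMap ↥F (SeparableClosure K)) = h.map σ.toRingHom := by
    rw [Polynomial.map_map]
    rfl
  have hroot' : Polynomial.aeval a h' = 0 := by
    rw [aeval_def, ← eval_map, hh'map]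
    exact hσ
  have hint : IsIntegral (↥F) a := ⟨h', hh'm, by rwa [← aeval_def]⟩
  have hdvd : minpoly (↥F) a ∣ h' := minpoly.dvd _ _ hroot'
  let Fa : IntermediateField (↥F) (SeparableClosure K) := IntermediateField.adjoin (↥F) {a}
  have hming : minpoly K a = g := (minpoly.eq_of_irreducible_of_monic hirr hroot hmonic).symm
  have hintK : IsIntegral K a := ⟨g, hmonic, by rwa [← aeval_def]⟩
  set n := Module.finrank K L with hn
  haveI : IsSepClosed (SeparableClosure K) := IsSepClosure.sep_closed K
  have hcard : Fintype.card (L →ₐ[K] (SeparableClosure K)) = n :=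
    AlgHom.card_of_splits K L (SeparableClosure K) fun x =>
      IsSepClosed.splits_codomain _ (Algebra.IsSeparable.isSeparable K x)
  have hdmap : ∀ v : L →ₐ[K] (SeparableClosure K), (h.map v.toRingHom).natDegree = h.natDegree :=
    fun v => hhm.natDegree_map _
  have hdeg : g.natDegree = n * h.natDegree := by
    have h1 : (g.map (algebraMap K (SeparableClosure K))).natDegree = g.natDegree := hmonic.natDegree_map _
    rw [hnorm] at h1
    rw [← h1, Polynomial.natDegree_prod _ _ (fun v _ => (hhm.map v.toRingHom).ne_zero)]
    rw [Finset.sum_congr rfl fun v _ => hdmap v, Finset.sum_const, Finset.card_univ, hcard,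
      smul_eq_mul]
  -- F is finite dimensional over K of rank n
  let e : L ≃ₐ[K] ↥F := AlgEquiv.ofBijective σ' (algHomToFieldRange_bijective σ)
  haveI : FiniteDimensional K (↥F) := e.toLinearEquiv.finiteDimensional
  have hrankF : Module.finrank K (↥F) = n := e.toLinearEquiv.finrank_eq.symm
  haveI hFa : FiniteDimensional (↥F) (↥Fa) := adjoin.finiteDimensional hint
  haveI : FiniteDimensional K (↥Fa) := Module.Finite.trans (↥F) (↥Fa)
  have hra : restrictScalars K Fa = F ⊔ IntermediateField.adjoin K {a} :=
    restrictScalars_adjoin_eq_sup K F {a}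
  haveI : FiniteDimensional K ↥(restrictScalars K Fa) :=
    (inferInstance : FiniteDimensional K (↥Fa))
  have hrankFa : Module.finrank K ↥(restrictScalars K Fa) =
      Module.finrank K (↥F) * Module.finrank (↥F) (↥Fa) :=
    (Module.finrank_mul_finrank K (↥F) (↥Fa)).symm
  have hminFdeg : (minpoly (↥F) a).natDegree ≤ h.natDegree := by
    have := Polynomial.natDegree_le_of_dvd hdvd hh'm.ne_zero
    rwa [hhm.natDegree_map] at this
  have hKa : Module.finrank K (↥K⟮a⟯) = n * h.natDegree := by
    rw [adjoin.finrank hintK, hming, hdeg]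
  have hle : restrictScalars K Fa ≤ K⟮a⟯ := by
    have h2 : K⟮a⟯ ≤ restrictScalars K Fa := hra ▸ le_sup_right
    have h3 : Module.finrank K ↥(restrictScalars K Fa) ≤ Module.finrank K (↥K⟮a⟯) := by
      rw [hrankFa, hKa, hrankF, adjoin.finrank hint]
      exact Nat.mul_le_mul_left n hminFdeg
    exact (IntermediateField.eq_of_le_of_finrank_le h2 h3).ge
  have hFle : F ≤ K⟮a⟯ := le_trans (hra ▸ le_sup_left) hle
  refine ⟨hFle, ?_⟩
  -- degree of minpoly F a equals h.natDegree
  have hKaF : K⟮a⟯ ≤ restrictScalars K Fa := hra ▸ le_sup_right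
  have heq : restrictScalars K Fa = K⟮a⟯ := le_antisymm hle hKaF
  have hdegeq : (minpoly (↥F) a).natDegree = h.natDegree := by
    have h4 : Module.finrank K ↥(restrictScalars K Fa) = Module.finrank K (↥K⟮a⟯) := by
      rw [heq]
    rw [hrankFa, hKa, hrankF, adjoin.finrank hint] at h4
    exact Nat.eq_of_mul_eq_mul_left (Module.finrank_pos (R := K) (M := L)) h4
  have hfinal : h' = minpoly (↥F) a := by
    apply Polynomial.eq_of_monic_of_dvd_of_natDegree_le (minpoly.monic hint) hh'm hdvd
    rw [hdegeq]
    exact (hhm.natDegree_map _).le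
  rw [← hfinal, hh'map]
end

section
/- Let g(T) ∈ K[T] be monic, irreducible, and separable, and let L ⊇ K be a finite separable extension with h(T) ∈ L[T] monic such that g(T) = Nm_{L|K} h(T). Then h(T) is irreducible in L[T]. -/
open Polynomial

/-- Let `g(T) ∈ K[T]` be monic, irreducible, and separable, and let `L ⊇ K`
be a finite separable extension with `h(T) ∈ L[T]` monic such that `g(T) = Nm_{L|K} h(T)`.
Then `h(T)` is irreducible in `L[T]`. -/
theorem irreducible_of_norm_eq
    (K L : Type*) [Field K] [Field L] [Algebra K L]
    [FiniteDimensional K L] [Algebra.IsSeparable K L]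
    (g : Polynomial K) (hmonic : g.Monic) (hirr : Irreducible g) (hsep : g.Separable)
    (h : Polynomial L) (hhm : h.Monic)
    (hnorm : g.map (algebraMap K (SeparableClosure K)) =
        ∏ v : L →ₐ[K] SeparableClosure K, h.map v.toRingHom) :
    Irreducible h := by
  set Ω := SeparableClosure K
  haveI : IsSepClosed Ω := IsSepClosure.sep_closed K
  have hcard : Fintype.card (L →ₐ[K] Ω) = Module.finrank K L :=
    AlgHom.card_of_splits K L Ω fun x =>
      IsSepClosed.splits_codomain _ (Algebra.IsSeparable.isSeparable K x)
  have hcard_pos : 0 < Fintype.card (L →ₐ[K] Ω) := by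
    rw [hcard]; exact Module.finrank_pos
  have hdeg : g.natDegree = Fintype.card (L →ₐ[K] Ω) * h.natDegree := by
    have : (g.map (algebraMap K Ω)).natDegree =
        ∑ v : L →ₐ[K] Ω, (h.map v.toRingHom).natDegree := by
      rw [hnorm, natDegree_prod_of_monic _ _ fun v _ => hhm.map _]
    simpa [hmonic.natDegree_map, fun v : L →ₐ[K] Ω => hhm.natDegree_map v.toRingHom,
      Finset.sum_const, Finset.card_univ, mul_comm] using this
  have hgd : g.natDegree ≠ 0 := hirr.natDegree_pos.ne'
  have hhd : h.natDegree ≠ 0 := by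
    intro h0; rw [h0, mul_zero] at hdeg; exact hgd hdeg
  obtain ⟨v₀⟩ : Nonempty (L →ₐ[K] Ω) := Fintype.card_pos_iff.mp hcard_pos
  letI : Algebra L Ω := v₀.toRingHom.toAlgebra
  haveI : IsScalarTower K L Ω :=
    IsScalarTower.of_algebraMap_eq fun x => (v₀.commutes x).symm
  -- h.map v₀ has a root
  have hdvd : h.map v₀.toRingHom ∣ g.map (algebraMap K Ω) := by
    rw [hnorm]; exact Finset.dvd_prod_of_mem _ (Finset.mem_univ v₀)
  have hsep' : (h.map v₀.toRingHom).Separable := (hsep.map).of_dvd hdvd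
  obtain ⟨α, hα⟩ := IsSepClosed.exists_root (h.map v₀.toRingHom)
    (by
      have : 0 < (h.map v₀.toRingHom).natDegree := by
        rwa [hhm.natDegree_map, pos_iff_ne_zero]
      exact (natDegree_pos_iff_degree_pos.mp this).ne') hsep'
  have haL : Polynomial.aeval α h = 0 := by
    rwa [aeval_def, ← eval_map]
  have haK : Polynomial.aeval α g = 0 := by
    rw [aeval_def, ← eval_map, hnorm, eval_prod]
    exact Finset.prod_eq_zero (Finset.mem_univ v₀) hα
  have hintK : IsIntegral K α := ⟨g, hmonic, haK⟩
  have hintL : IsIntegral L α := hintK.tower_top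
  have hming : g = minpoly K α := minpoly.eq_of_irreducible_of_monic hirr haK hmonic
  set m := minpoly L α with hm
  have hmdvd : m ∣ h := minpoly.dvd L α haL
  -- degree comparison
  haveI : FiniteDimensional L (IntermediateField.adjoin L {α} : IntermediateField L Ω) :=
    IntermediateField.adjoin.finiteDimensional hintL
  have hE : Module.finrank L (IntermediateField.adjoin L {α} : IntermediateField L Ω)
      = m.natDegree := IntermediateField.adjoin.finrank hintL
  have hKα := IntermediateField.adjoin.finrank hintK
  rw [← hming] at hKα
  have hle : g.natDegree ≤ Module.finrank K L * m.natDegree := by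
    rw [← hE, ← hKα]
    set E := (IntermediateField.adjoin L {α} : IntermediateField L Ω) with hEdef
    haveI : FiniteDimensional K E := FiniteDimensional.trans K L E
    rw [Module.finrank_mul_finrank K L E]
    have hsub : (IntermediateField.adjoin K {α} : IntermediateField K Ω) ≤
        (IntermediateField.restrictScalars K E : IntermediateField K Ω) :=
      IntermediateField.adjoin_le_iff.mpr fun x hx =>
        IntermediateField.subset_adjoin L _ hx
    have hmem : ∀ x ∈ (IntermediateField.adjoin K {α} : IntermediateField K Ω), x ∈ E :=
      fun x hx => hsub hx
    refine LinearMap.finrank_le_finrank_of_injective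
      (f := { toFun := fun x => ⟨x.1, hmem x.1 x.2⟩
              map_add' := fun x y => rfl
              map_smul' := fun c x => rfl })
      (by intro x y hxy
          have h2 := congrArg (Subtype.val : E → Ω) hxy
          exact Subtype.ext h2)
  -- conclude deg h ≤ deg m, hence h = m
  have hdegle : h.natDegree ≤ m.natDegree := by
    rw [hdeg, hcard] at hle
    exact Nat.le_of_mul_le_mul_left hle (by rw [← hcard] at *; exact hcard_pos)
  obtain ⟨c, hc⟩ := hmdvd
  have hm0 : m ≠ 0 := minpoly.ne_zero hintL
  have hc0 : c ≠ 0 := by rintro rfl; rw [mul_zero] at hc; exact hhm.ne_zero hc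
  have hcdeg : c.natDegree = 0 := by
    have := natDegree_mul hm0 hc0
    rw [← hc] at this
    omega
  have hcmonic : c.Monic := by
    have := hhm
    rw [hc] at this
    have hlc := leadingCoeff_mul m c
    rw [this.leadingCoeff, (minpoly.monic hintL).leadingCoeff, one_mul] at hlc
    exact hlc.symm
  have : c = 1 := hcmonic.natDegree_eq_zero.mp hcdeg
  rw [this, mul_one] at hc
  rw [hc]
  exact minpoly.irreducible hintL
end

section
/- Let g(T) ∈ K[T] be monic, irreducible, and separable, and let L ⊇ K be a finite separable extension with h(T) ∈ L[T] monic such that h(T) divides g(T) in L[T] and deg g(T) = [L:K] · deg h(T). Then L is generated over K by the coefficients of h(T). -/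
/-!
Let `F ⊆ L` be the field generated over `K` by the coefficients of `h`, so that `h ∈ F[T]` still
divides `g`. A root `α` of `h` has degree `deg g` over `K` but degree at most `deg h` over `F`,
so `[L:K] · deg h = deg g ≤ [F:K] · deg h`. Hence `[L:K] ≤ [F:K]`, i.e. `F = L`.
-/

open Polynomial Module

/-- The root of `p` in the ring `AdjoinRoot p`, a field or not, has minimal polynomial `g`
over `K`. -/
theorem natDegree_le_finrank_mul_natDegree_of_dvd_map {K F : Type*} [Field K] [Field F]
    [Algebra K F] [FiniteDimensional K F] {g : K[X]} (hg : Irreducible g) {p : F[X]}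
    (hp : 0 < p.natDegree) (hdvd : p ∣ g.map (algebraMap K F)) :
    g.natDegree ≤ finrank K F * p.natDegree := by
  have : Nontrivial (AdjoinRoot p) :=
    AdjoinRoot.nontrivial p (natDegree_pos_iff_degree_pos.1 hp).ne'
  have hrank : finrank K (AdjoinRoot p) = finrank K F * p.natDegree := by
    rw [← Module.finrank_mul_finrank K F (AdjoinRoot p)]
    exact congrArg _ finrank_quotient_span_eq_natDegree
  have : Module.Finite K (AdjoinRoot p) :=
    Module.finite_of_finrank_pos (hrank ▸ Nat.mul_pos Module.finrank_pos hp)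
  have hroot : aeval (AdjoinRoot.root p) g = 0 := by
    rw [← aeval_map_algebraMap F, AdjoinRoot.aeval_eq, AdjoinRoot.mk_eq_zero]
    exact hdvd
  calc g.natDegree = (minpoly K (AdjoinRoot.root p)).natDegree := by
        rw [← minpoly.eq_of_irreducible hg hroot,
          natDegree_mul_C (inv_ne_zero (leadingCoeff_ne_zero.2 hg.ne_zero))]
    _ ≤ finrank K (AdjoinRoot p) := minpoly.natDegree_le _
    _ = finrank K F * p.natDegree := hrank

theorem generated_by_coeffs_of_normic_general
    (K L : Type*) [Field K] [Field L] [Algebra K L]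
    [FiniteDimensional K L]
    (g : Polynomial K) (hirr : Irreducible g)
    (h : Polynomial L)
    (hdvd : h ∣ g.map (algebraMap K L))
    (hdeg : g.natDegree = Module.finrank K L * h.natDegree) :
    Algebra.adjoin K (Set.range h.coeff) = ⊤ := by
  set F := IntermediateField.adjoin K (Set.range h.coeff)
  obtain ⟨h₀, hmap⟩ : ∃ h₀ : F[X], h₀.map (algebraMap F L) = h :=
    (lifts_iff_coeff_lifts h).2 fun n ↦
      ⟨⟨_, IntermediateField.subset_adjoin K _ ⟨n, rfl⟩⟩, rfl⟩
  rw [← hmap, natDegree_map] at hdeg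
  have hdvdF : h₀ ∣ g.map (algebraMap K F) := by
    rwa [← map_dvd_map' (algebraMap F L), map_map, ← IsScalarTower.algebraMap_eq, hmap]
  have hpos : 0 < h₀.natDegree := Nat.pos_of_mul_pos_left (hdeg ▸ hirr.natDegree_pos)
  have hrank : finrank K L ≤ finrank K F := Nat.le_of_mul_le_mul_right
    (hdeg ▸ natDegree_le_finrank_mul_natDegree_of_dvd_map hirr hpos hdvdF) hpos
  have hF : F = ⊤ :=
    IntermediateField.eq_of_le_of_finrank_le le_top (by rwa [IntermediateField.finrank_top'])
  rw [← IntermediateField.adjoin_toSubalgebra]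
  change F.toSubalgebra = ⊤
  rw [hF, IntermediateField.top_toSubalgebra]

/-- Let `g(T) ∈ K[T]` be monic, irreducible, and separable, and let `L ⊇ K`
be a finite separable extension with `h(T) ∈ L[T]` monic such that `h(T)` divides `g(T)`
in `L[T]` and `deg g(T) = [L:K] · deg h(T)`. Then `L` is generated over `K` by the
coefficients of `h(T)`. -/
theorem generated_by_coeffs_of_normic
    (K L : Type*) [Field K] [Field L] [Algebra K L]
    [FiniteDimensional K L] [Algebra.IsSeparable K L]
    (g : Polynomial K) (hmonic : g.Monic) (hirr : Irreducible g) (hsep : g.Separable)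
    (h : Polynomial L) (hhm : h.Monic)
    (hdvd : h ∣ g.map (algebraMap K L))
    (hdeg : g.natDegree = Module.finrank K L * h.natDegree) :
    Algebra.adjoin K (Set.range h.coeff) = ⊤ :=
  generated_by_coeffs_of_normic_general K L g hirr h hdvd hdeg
end

section
/- Let g(T) ∈ K[T] be monic, irreducible, and separable, and let N be a splitting field of g over K. Let L₁, L₂ be intermediate fields of N/K and let h₁(T) ∈ L₁[T], h₂(T) ∈ L₂[T] be monic polynomials with hᵢ dividing g and g = Nm_{Lᵢ|K} hᵢ for i = 1, 2, where Lᵢ is generated over K by the coefficients of hᵢ. If h₁(T) divides h₂(T) in N[T], then L₂ ⊆ L₁. -/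
open Polynomial IntermediateField

/-!
Every `σ ∈ Gal(N/L₁)` fixes `h₁`, so `h₁` divides both factors `h₂` and `σ h₂` of the norm
decomposition `g = ∏_v v h₂'`. As `g` is separable, hence squarefree in `N[T]`, and `h₁` is not
a unit (its norm `g` is not), two such factors can only both be divisible by `h₁` if they are the
same factor, i.e. `σ` restricts to the identity on `L₂`. By the Galois correspondence, `L₂ ≤ L₁`.
-/

theorem Squarefree.eq_of_dvd_of_dvd_prod {ι M : Type*} [Fintype ι] [CommMonoid M]
    {f : ι → M} (hf : Squarefree (∏ i, f i)) {q : M} (hq : ¬IsUnit q) {i j : ι}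
    (hi : q ∣ f i) (hj : q ∣ f j) : i = j := by
  classical
  by_contra hij
  have hpair : f i * f j ∣ ∏ i, f i := by
    rw [← Finset.prod_pair hij]
    exact Finset.prod_dvd_prod_of_subset _ _ _ (Finset.subset_univ _)
  exact hq (hf q ((mul_dvd_mul hi hj).trans hpair))

section NormDecomposition

variable {K L N : Type*} [Field K] [Field L] [Field N] [Algebra K L] [Algebra K N]
  [Fintype (L →ₐ[K] N)] {g : K[X]} {h : L[X]}

theorem not_isUnit_map_of_map_eq_prod_map (hg : ¬IsUnit g)
    (hnorm : g.map (algebraMap K N) = ∏ v : L →ₐ[K] N, h.map v.toRingHom) (φ : L →+* N) :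
    ¬IsUnit (h.map φ) := by
  rw [isUnit_map]
  intro hu
  apply hg
  rw [← isUnit_map (algebraMap K N), hnorm]
  exact IsUnit.prod_univ_iff.mpr fun v ↦ (isUnit_map _).mpr hu

theorem algHom_eq_of_dvd_map_of_separable (hsep : g.Separable)
    (hnorm : g.map (algebraMap K N) = ∏ v : L →ₐ[K] N, h.map v.toRingHom) {q : N[X]}
    (hq : ¬IsUnit q) {v w : L →ₐ[K] N} (hv : q ∣ h.map v.toRingHom)
    (hw : q ∣ h.map w.toRingHom) : v = w := by
  have hsq : Squarefree (∏ v : L →ₐ[K] N, h.map v.toRingHom) :=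
    hnorm ▸ hsep.map.squarefree
  exact hsq.eq_of_dvd_of_dvd_prod hq hv hw

end NormDecomposition

theorem IntermediateField.map_map_algebraMap_of_mem_fixingSubgroup {K N : Type*} [Field K]
    [Field N] [Algebra K N] {L : IntermediateField K N} {σ : Gal(N/K)}
    (hσ : σ ∈ L.fixingSubgroup) (h : L[X]) :
    (h.map (algebraMap L N)).map (σ : N →+* N) = h.map (algebraMap L N) := by
  rw [Polynomial.map_map]
  congr 1
  ext x
  exact hσ x

theorem normic_dvd_implies_field_containment_general
    (K N : Type*) [Field K] [Field N] [Algebra K N]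
    (g : Polynomial K) (hirr : Irreducible g) (hsep : g.Separable)
    [Polynomial.IsSplittingField K N g] [FiniteDimensional K N]
    (L₁ L₂ : IntermediateField K N) (h₁ h₂ : Polynomial N)
    (hnorm₁ : ∃ h₁' : Polynomial L₁, h₁'.map (algebraMap L₁ N) = h₁ ∧
        g.map (algebraMap K N) = ∏ v : L₁ →ₐ[K] N, h₁'.map v.toRingHom)
    (hnorm₂ : ∃ h₂' : Polynomial L₂, h₂'.map (algebraMap L₂ N) = h₂ ∧
        g.map (algebraMap K N) = ∏ v : L₂ →ₐ[K] N, h₂'.map v.toRingHom)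
    (hdiv : h₁ ∣ h₂) :
    L₂ ≤ L₁ := by
  obtain ⟨h₁', rfl, hprod₁⟩ := hnorm₁
  obtain ⟨h₂', rfl, hprod₂⟩ := hnorm₂
  have : IsGalois K N := IsGalois.of_separable_splitting_field hsep
  have hunit : ¬IsUnit (h₁'.map (algebraMap L₁ N)) :=
    not_isUnit_map_of_map_eq_prod_map hirr.not_isUnit hprod₁ _
  rw [← IsGalois.fixedField_fixingSubgroup L₁, le_iff_le]
  intro σ hσ
  have hdiv_σ :
      h₁'.map (algebraMap L₁ N) ∣ h₂'.map ((σ : N →ₐ[K] N).comp L₂.val).toRingHom := by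
    rw [← map_map_algebraMap_of_mem_fixingSubgroup hσ]
    convert Polynomial.map_dvd (σ : N →+* N) hdiv using 1
    rw [Polynomial.map_map]
    rfl
  have hσ_val : (σ : N →ₐ[K] N).comp L₂.val = L₂.val :=
    algHom_eq_of_dvd_map_of_separable hsep hprod₂ hunit hdiv_σ hdiv
  exact (mem_fixingSubgroup_iff _ _).mpr fun x hx ↦ DFunLike.congr_fun hσ_val ⟨x, hx⟩

/-- Let `g(T) ∈ K[T]` be monic, irreducible, and separable, and let `N` be a
splitting field of `g` over `K`. Let `L₁, L₂` be intermediate fields of `N/K` and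
`h₁ ∈ L₁[T]`, `h₂ ∈ L₂[T]` monic polynomials, with `hᵢ ∣ g` and `g = Nm_{Lᵢ|K} hᵢ`, where
`Lᵢ` is generated over `K` by the coefficients of `hᵢ`. If `h₁ ∣ h₂` in `N[T]`, then
`L₂ ⊆ L₁`. -/
theorem normic_dvd_implies_field_containment
    (K N : Type*) [Field K] [Field N] [Algebra K N]
    (g : Polynomial K) (hmonic : g.Monic) (hirr : Irreducible g) (hsep : g.Separable)
    [Polynomial.IsSplittingField K N g] [FiniteDimensional K N]
    (L₁ L₂ : IntermediateField K N) (h₁ h₂ : Polynomial N)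
    (hm₁ : h₁.Monic) (hm₂ : h₂.Monic)
    (hcoef₁ : IntermediateField.adjoin K (Set.range h₁.coeff) = L₁)
    (hcoef₂ : IntermediateField.adjoin K (Set.range h₂.coeff) = L₂)
    (hdvd₁ : h₁ ∣ g.map (algebraMap K N)) (hdvd₂ : h₂ ∣ g.map (algebraMap K N))
    (hnorm₁ : ∃ h₁' : Polynomial L₁, h₁'.map (algebraMap L₁ N) = h₁ ∧
        g.map (algebraMap K N) = ∏ v : L₁ →ₐ[K] N, h₁'.map v.toRingHom)
    (hnorm₂ : ∃ h₂' : Polynomial L₂, h₂'.map (algebraMap L₂ N) = h₂ ∧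
        g.map (algebraMap K N) = ∏ v : L₂ →ₐ[K] N, h₂'.map v.toRingHom)
    (hdiv : h₁ ∣ h₂) :
    L₂ ≤ L₁ :=
  normic_dvd_implies_field_containment_general K N g hirr hsep L₁ L₂ h₁ h₂ hnorm₁ hnorm₂ hdiv
end

section
/- Let G ≤ GL_{n,k} be a reductive linear algebraic group over a perfect field k, let T ≤ G be a maximal torus, and let t ∈ T(k̄). Let W_t be the set of eigenvalues of t (as an element of GL_n(k̄)), let L = k(W_t), and let Φ_t ≤ (k̄)^× be the subgroup generated by W_t. If Φ_t is a free abelian group of rank equal to dim T, then the torus T is split over L. -/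
open IntermediateField

/-- Let `G ≤ GL_{n,k}` be a reductive group over a perfect field `k`, let
`T ≤ G` be a maximal torus and `t ∈ T(k̄)`.  Let `W_t` be the set of eigenvalues of `t`,
`L = k(W_t)` and `Φ_t ≤ k̄ˣ` the subgroup generated by `W_t`.  If `Φ_t` is free abelian
of rank `dim T`, then `T` is split over `L`.

Mathlib has no theory of linear algebraic groups, so we encode the torus `T` by its
character lattice `XT` (a free abelian group of rank `dim T = d`) together with the
natural action of the absolute Galois group `Gal(k̄/k)` on `XT`; the element
`t ∈ T(k̄)` is encoded by the evaluation homomorphism `γ : XT → k̄ˣ`, `χ ↦ χ(t)`, which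
is compatible with the Galois actions.  The eigenvalues of `t` (acting via the ambient
representation `T ≤ GL_n`) are the values `γ(χ)` for `χ` in the set `Ω` of weights of the
standard representation, and `Ω` generates `XT` since `T → GL_n` is a closed embedding.
"`T` is split over `L`" means that `Gal(k̄/L)` acts trivially on the character lattice. -/
theorem torus_split_over_field_of_eigenvalues
    (K : Type*) [Field K] [PerfectField K] (d : ℕ)
    (XT : Type*) [AddCommGroup XT] [Module.Free ℤ XT] [Module.Finite ℤ XT]
    (hrank : Module.finrank ℤ XT = d)
    [DistribMulAction ((AlgebraicClosure K) ≃ₐ[K] (AlgebraicClosure K)) XT]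
    (γ : XT →+ Additive (AlgebraicClosure K)ˣ)
    (hequiv : ∀ (σ : (AlgebraicClosure K) ≃ₐ[K] (AlgebraicClosure K)) (χ : XT),
      σ ((Additive.toMul (γ χ) : (AlgebraicClosure K)ˣ) : AlgebraicClosure K) =
        ((Additive.toMul (γ (σ • χ)) : (AlgebraicClosure K)ˣ) : AlgebraicClosure K))
    (Ω : Set XT) (hΩ : AddSubgroup.closure Ω = ⊤)
    (hfree : Module.Free ℤ γ.range)
    (hΦrank : Module.finrank ℤ γ.range = d) :
    ∀ σ : (AlgebraicClosure K) ≃ₐ[K] (AlgebraicClosure K),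
      (∀ x ∈ IntermediateField.adjoin K
          ((fun χ => ((Additive.toMul (γ χ) : (AlgebraicClosure K)ˣ) : AlgebraicClosure K))
            '' Ω), σ x = x) →
      ∀ χ : XT, σ • χ = χ := by

  classical
  intro σ hσ
  -- `γ` as a `ℤ`-linear map
  set f : XT →ₗ[ℤ] Additive (AlgebraicClosure K)ˣ := γ.toIntLinearMap with hf
  -- identify `γ.range` (as an `AddSubgroup`) with `LinearMap.range f`
  have ememr : ∀ x : Additive (AlgebraicClosure K)ˣ,
      x ∈ γ.range ↔ x ∈ LinearMap.range f := by
    intro x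
    constructor
    · rintro ⟨y, rfl⟩; exact ⟨y, rfl⟩
    · rintro ⟨y, rfl⟩; exact ⟨y, rfl⟩
  let e : γ.range ≃+ LinearMap.range f :=
    { toFun := fun x => ⟨x.1, (ememr x.1).1 x.2⟩
      invFun := fun x => ⟨x.1, (ememr x.1).2 x.2⟩
      left_inv := fun x => rfl
      right_inv := fun x => rfl
      map_add' := fun x y => rfl }
  let eL : γ.range ≃ₗ[ℤ] LinearMap.range f := e.toIntLinearEquiv
  have hfin : Module.Finite ℤ (LinearMap.range f) := Module.Finite.range f
  have hfree' : Module.Free ℤ (LinearMap.range f) := Module.Free.of_equiv eL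
  have hrk' : Module.finrank ℤ (LinearMap.range f) = d := by
    rw [← eL.finrank_eq]; exact hΦrank
  -- rank-nullity over ℤ
  have hRN := LinearMap.lift_rank_range_add_rank_ker f
  have hrXT : Module.rank ℤ XT = (d : Cardinal) := by
    rw [← Module.finrank_eq_rank, hrank]
  have hrR : Module.rank ℤ (LinearMap.range f) = (d : Cardinal) := by
    rw [← Module.finrank_eq_rank, hrk']
  rw [hrXT, hrR] at hRN
  simp only [Cardinal.lift_natCast] at hRN
  have hlt : Cardinal.lift (Module.rank ℤ (LinearMap.ker f)) < Cardinal.aleph0 :=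
    lt_of_le_of_lt (le_add_self.trans hRN.le) (Cardinal.nat_lt_aleph0 d)
  obtain ⟨m, hm⟩ := Cardinal.lt_aleph0.mp hlt
  rw [hm] at hRN
  have hm0 : m = 0 := by
    have hdm : d + m = d := by exact_mod_cast hRN
    omega
  rw [hm0] at hm
  have hker0 : Module.rank ℤ (LinearMap.ker f) = 0 := by
    exact_mod_cast Cardinal.lift_eq_zero.mp (by exact_mod_cast hm)
  have hker : LinearMap.ker f = ⊥ := Submodule.rank_eq_zero.mp hker0
  have hinj : Function.Injective γ := by
    have := LinearMap.ker_eq_bot.mp hker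
    exact this
  -- fixed points form a subgroup
  let S : AddSubgroup XT :=
    { carrier := {χ | σ • χ = χ}
      zero_mem' := smul_zero σ
      add_mem' := by
        intro a b ha hb
        simp only [Set.mem_setOf_eq] at *
        rw [smul_add, ha, hb]
      neg_mem' := by
        intro a ha
        simp only [Set.mem_setOf_eq] at *
        rw [smul_neg, ha] }
  have hΩS : Ω ⊆ S := by
    intro χ hχ
    have h1 : ((Additive.toMul (γ χ) : (AlgebraicClosure K)ˣ) : AlgebraicClosure K) ∈
        IntermediateField.adjoin K
          ((fun χ => ((Additive.toMul (γ χ) : (AlgebraicClosure K)ˣ) : AlgebraicClosure K))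
            '' Ω) :=
      IntermediateField.subset_adjoin _ _ ⟨χ, hχ, rfl⟩
    have h2 := hσ _ h1
    have h3 : ((Additive.toMul (γ (σ • χ)) : (AlgebraicClosure K)ˣ) : AlgebraicClosure K) =
        ((Additive.toMul (γ χ) : (AlgebraicClosure K)ˣ) : AlgebraicClosure K) :=
      (hequiv σ χ).symm.trans h2
    have h4 : γ (σ • χ) = γ χ := Additive.toMul.injective (Units.ext h3)
    exact hinj h4
  intro χ
  have : (⊤ : AddSubgroup XT) ≤ S := hΩ ▸ (AddSubgroup.closure_le S).mpr hΩS
  exact this (AddSubgroup.mem_top χ)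
end

section
/- Let g(T) ∈ Q[T] be an irreducible polynomial of degree 4 with Galois group S₄ acting on its 4 roots, let N be its splitting field, and let M ⊆ N be the fixed field of the subgroup H = ⟨(1 2), (3 4)⟩ of S₄ (so [M : Q] = 6). Then g(T) factors over M as a product of two irreducible quadratics, and neither quadratic factor h satisfies deg g = [L : Q] · deg h where L is the field generated by the coefficients of h; indeed, the coefficients of each factor generate M itself. -/
/-!
Over `N`, `g = ∏ᵢ (X - rᵢ)`, so every monic factor of `g` over an intermediate field is
`∏_{i ∈ s} (X - rᵢ)` for a set `s` of root indices, and `σ` fixes its coefficients exactly when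
`e σ` stabilises `s`; by the Galois correspondence the coefficients generate the fixed field of
the preimage of the stabiliser of `s`. The group `⟨(0 1), (2 3)⟩` is the stabiliser of `{0, 1}`
(of index `6`), and the only pairs it stabilises are `{0, 1}` and `{2, 3}`, which have this same
stabiliser. So over `M` the quadratic factors are the ones for `{0, 1}` and `{2, 3}`, their
coefficients generate `M`, and they are irreducible because no root is fixed by the group.
-/

open Polynomial IntermediateField Lagrange Pointwise Equiv MulAction

namespace Lagrange

variable {R ι : Type*}

theorem nodal_eq_multiset_prod [CommRing R] (s : Finset ι) (r : ι → R) :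
    nodal s r = ((s.val.map r).map fun a => X - C a).prod := by
  rw [nodal_eq, Finset.prod_eq_multiset_prod, Multiset.map_map]
  rfl

theorem roots_nodal [CommRing R] [IsDomain R] (s : Finset ι) (r : ι → R) :
    (nodal s r).roots = s.val.map r := by
  rw [nodal_eq_multiset_prod, roots_multiset_prod_X_sub_C]

theorem nodal_injective [CommRing R] [IsDomain R] {r : ι → R} (hr : Function.Injective r) :
    Function.Injective fun s : Finset ι => nodal s r := fun s t hst =>
  Finset.val_injective <| Multiset.map_injective hr <| by
    rw [← roots_nodal, ← roots_nodal]; exact congrArg roots hst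

theorem map_nodal_eq_nodal_smul [CommRing R] [DecidableEq ι] (f : R →+* R) (π : Equiv.Perm ι)
    {r : ι → R} (hf : ∀ i, f (r i) = r (π i)) (s : Finset ι) :
    (nodal s r).map f = nodal (π • s) r := by
  rw [nodal_eq, nodal_eq, Polynomial.map_prod, Finset.smul_finset_def,
    Finset.prod_image fun _ _ _ _ h => MulAction.injective π h]
  simp [hf]

theorem eq_nodal_univ_of_isRoot [Field R] [Fintype ι] {p : R[X]} (hp : p.Monic)
    (hdeg : p.natDegree = Fintype.card ι) {r : ι → R} (hr : Function.Injective r)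
    (hroot : ∀ i, p.IsRoot (r i)) : p = nodal Finset.univ r := by
  have hle : Finset.univ.val.map r ≤ p.roots := by
    rw [Multiset.le_iff_subset (Finset.univ.nodup.map hr)]
    intro x hx
    obtain ⟨i, -, rfl⟩ := Multiset.mem_map.mp hx
    exact (mem_roots hp.ne_zero).mpr (hroot i)
  have hdvd : nodal Finset.univ r ∣ p := by
    rw [nodal_eq_multiset_prod]
    exact (Multiset.prod_X_sub_C_dvd_iff_le_roots hp.ne_zero _).mpr hle
  exact eq_of_monic_of_dvd_of_natDegree_le nodal_monic hp hdvd (by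
    rw [natDegree_nodal, hdeg, Finset.card_univ])

theorem exists_subset_eq_nodal_of_dvd [Field R] {p : R[X]} (hp : p.Monic) {t : Finset ι}
    {r : ι → R} (hr : Set.InjOn r t) (hdvd : p ∣ nodal t r) : ∃ s ⊆ t, p = nodal s r := by
  classical
  have hsplit : Splits p :=
    (Splits.prod fun i _ => Splits.X_sub_C (r i)).of_dvd nodal_ne_zero hdvd
  have hle : p.roots ≤ t.val.map r := roots_nodal t r ▸ roots.le_of_dvd nodal_ne_zero hdvd
  set s := t.filter (r · ∈ p.roots)
  have hroots : p.roots = s.val.map r := by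
    refine ((Multiset.nodup_of_le hle (t.nodup.map_on hr)).ext (s.nodup.map_on
      (hr.mono (Finset.filter_subset _ _)))).mpr fun a => ⟨fun ha => ?_, ?_⟩
    · obtain ⟨i, hi, rfl⟩ := Multiset.mem_map.mp (Multiset.mem_of_le hle ha)
      exact Multiset.mem_map_of_mem r (Finset.mem_filter.mpr ⟨hi, ha⟩)
    · intro ha
      obtain ⟨i, hi, rfl⟩ := Multiset.mem_map.mp ha
      exact (Finset.mem_filter.mp hi).2
  refine ⟨s, Finset.filter_subset _ _, ?_⟩
  rw [hsplit.eq_prod_roots_of_monic hp, hroots, nodal_eq_multiset_prod]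

end Lagrange

section FixedField

variable {F N ι : Type*} [Field F] [Field N] [Algebra F N] [DecidableEq ι]

theorem coeff_nodal_mem_fixedField (ρ : (N ≃ₐ[F] N) →* Perm ι) {r : ι → N}
    (hρ : ∀ σ i, σ (r i) = r (ρ σ i)) (s : Finset ι) (n : ℕ) :
    (nodal s r).coeff n ∈ fixedField ((stabilizer (Perm ι) s).comap ρ) := by
  rw [mem_fixedField_iff]
  intro σ hσ
  have hmap := map_nodal_eq_nodal_smul (σ : N →+* N) (ρ σ) (hρ σ) s
  rw [mem_stabilizer_iff.mp hσ] at hmap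
  simpa [coeff_map] using congrArg (coeff · n) hmap

theorem fixingSubgroup_adjoin_coeff_nodal_le (ρ : (N ≃ₐ[F] N) →* Perm ι) {r : ι → N}
    (hr : Function.Injective r) (hρ : ∀ σ i, σ (r i) = r (ρ σ i)) (s : Finset ι) :
    (adjoin F (Set.range (nodal s r).coeff)).fixingSubgroup ≤
      (stabilizer (Perm ι) s).comap ρ := by
  intro σ hσ
  have hfix : (nodal s r).map (σ : N →+* N) = nodal s r := Polynomial.ext fun n => by
    rw [coeff_map]
    exact hσ ⟨_, subset_adjoin _ _ ⟨n, rfl⟩⟩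
  exact nodal_injective hr ((map_nodal_eq_nodal_smul _ (ρ σ) (hρ σ) s).symm.trans hfix)

theorem adjoin_coeff_nodal_eq_fixedField [FiniteDimensional F N] [IsGalois F N]
    (ρ : (N ≃ₐ[F] N) →* Perm ι) {r : ι → N} (hr : Function.Injective r)
    (hρ : ∀ σ i, σ (r i) = r (ρ σ i)) (s : Finset ι) :
    adjoin F (Set.range (nodal s r).coeff) = fixedField ((stabilizer (Perm ι) s).comap ρ) := by
  refine le_antisymm (adjoin_le_iff.mpr ?_) ?_
  · rintro _ ⟨n, rfl⟩
    exact coeff_nodal_mem_fixedField ρ hρ s n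
  · exact (fixedField_le (fixingSubgroup_adjoin_coeff_nodal_le ρ hr hρ s)).trans_eq
      (IsGalois.fixedField_fixingSubgroup _)

theorem IntermediateField.adjoin_range_coeff_eq_top_iff (M : IntermediateField F N) (h : M[X]) :
    adjoin F (Set.range h.coeff) = ⊤ ↔
      adjoin F (Set.range (h.map (algebraMap M N)).coeff) = M := by
  have hcoeff : (h.map (algebraMap M N)).coeff = Subtype.val ∘ h.coeff :=
    funext fun n => coeff_map _ n
  rw [← (lift_injective M).eq_iff, lift_adjoin, lift_top, hcoeff, Set.range_comp]

end FixedField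

abbrev pairStabilizer : Subgroup (Perm (Fin 4)) :=
  stabilizer (Perm (Fin 4)) ({0, 1} : Finset (Fin 4))

theorem closure_swap_swap_eq_pairStabilizer :
    Subgroup.closure {swap (0 : Fin 4) 1, swap (2 : Fin 4) 3} = pairStabilizer := by
  refine le_antisymm ((Subgroup.closure_le _).mpr ?_) fun π hπ => ?_
  · rintro _ (rfl | rfl) <;> exact mem_stabilizer_iff.mpr (by decide)
  · have hcases : ∀ π : Perm (Fin 4), π • ({0, 1} : Finset (Fin 4)) = {0, 1} →
        π = 1 ∨ π = swap 0 1 ∨ π = swap 2 3 ∨ π = swap 0 1 * swap 2 3 := by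
      decide
    have h01 : swap (0 : Fin 4) 1 ∈ Subgroup.closure {swap (0 : Fin 4) 1, swap (2 : Fin 4) 3} :=
      Subgroup.subset_closure (by simp)
    have h23 : swap (2 : Fin 4) 3 ∈ Subgroup.closure {swap (0 : Fin 4) 1, swap (2 : Fin 4) 3} :=
      Subgroup.subset_closure (by simp)
    rcases hcases π hπ with rfl | rfl | rfl | rfl
    exacts [one_mem _, h01, h23, mul_mem h01 h23]

theorem index_pairStabilizer : pairStabilizer.index = 6 := by
  have hcard : Nat.card pairStabilizer = 4 := by
    rw [Nat.card_eq_fintype_card]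
    decide
  have hmul := pairStabilizer.index_mul_card
  rw [hcard, Nat.card_perm, Nat.card_fin, show Nat.factorial 4 = 6 * 4 from rfl] at hmul
  exact Nat.eq_of_mul_eq_mul_right (by norm_num) hmul

theorem exists_mem_pairStabilizer_apply_ne (i : Fin 4) : ∃ π ∈ pairStabilizer, π i ≠ i := by
  refine ⟨if i < 2 then swap 0 1 else swap 2 3, ?_, ?_⟩ <;> revert i <;> decide

theorem stabilizer_eq_pairStabilizer_of_swap_smul {s : Finset (Fin 4)} (hs : s.card = 2)
    (h01 : swap (0 : Fin 4) 1 • s = s) (h23 : swap (2 : Fin 4) 3 • s = s) :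
    stabilizer (Perm (Fin 4)) s = pairStabilizer := by
  have hpair : ∀ t : Finset (Fin 4), t.card = 2 → swap (0 : Fin 4) 1 • t = t →
      swap (2 : Fin 4) 3 • t = t → t = {0, 1} ∨ t = {2, 3} := by
    decide
  have hstab : ∀ π : Perm (Fin 4), π • ({2, 3} : Finset (Fin 4)) = {2, 3} ↔
      π • ({0, 1} : Finset (Fin 4)) = {0, 1} := by
    decide
  rcases hpair s hs h01 h23 with rfl | rfl
  · rfl
  · ext π
    exact hstab π

section QuarticGalois

variable {F N : Type*} [Field F] [Field N] [Algebra F N] {ρ : (N ≃ₐ[F] N) →* Perm (Fin 4)}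
  {r : Fin 4 → N}

theorem apply_notMem_fixedField_comap_pairStabilizer (hρ_surj : Function.Surjective ρ)
    (hr : Function.Injective r) (hρ : ∀ σ i, σ (r i) = r (ρ σ i)) (i : Fin 4) :
    r i ∉ fixedField (pairStabilizer.comap ρ) := by
  intro hi
  obtain ⟨π, hπ, hπi⟩ := exists_mem_pairStabilizer_apply_ne i
  obtain ⟨σ, rfl⟩ := hρ_surj π
  exact hπi (hr ((hρ σ i).symm.trans ((mem_fixedField_iff _ _).mp hi σ hπ)))

theorem exists_irreducible_map_eq_nodal (hρ_surj : Function.Surjective ρ)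
    (hr : Function.Injective r) (hρ : ∀ σ i, σ (r i) = r (ρ σ i)) {s : Finset (Fin 4)}
    (hs : s.card = 2) (hstab : stabilizer (Perm (Fin 4)) s = pairStabilizer) :
    ∃ q : (fixedField (pairStabilizer.comap ρ))[X], q.Monic ∧ Irreducible q ∧
      q.natDegree = 2 ∧ q.map (algebraMap _ N) = nodal s r := by
  set M := fixedField (pairStabilizer.comap ρ)
  have hcoeff (n : ℕ) : (nodal s r).coeff n ∈ M := by
    simpa only [hstab] using coeff_nodal_mem_fixedField ρ hρ s n
  have hlifts : nodal s r ∈ lifts (algebraMap M N) :=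
    (lifts_iff_coeff_lifts _).mpr fun n => ⟨⟨_, hcoeff n⟩, rfl⟩
  obtain ⟨q, hmap, hdeg, hmonic⟩ := lifts_and_natDegree_eq_and_monic hlifts nodal_monic
  rw [natDegree_nodal, hs] at hdeg
  refine ⟨q, hmonic, irreducible_of_degree_le_three_of_not_isRoot (by simp [hdeg])
    fun x hx => ?_, hdeg, hmap⟩
  have hroot : (nodal s r).eval (algebraMap M N x) = 0 := by
    rw [← hmap, eval_map, eval₂_hom, hx.eq_zero, map_zero]
  obtain ⟨i, -, hi⟩ := Finset.prod_eq_zero_iff.mp (eval_nodal.symm.trans hroot)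
  exact apply_notMem_fixedField_comap_pairStabilizer hρ_surj hr hρ i (sub_eq_zero.mp hi ▸ x.2)

theorem adjoin_coeff_nodal_eq_fixedField_comap_pairStabilizer [FiniteDimensional F N]
    [IsGalois F N] (hρ_surj : Function.Surjective ρ) (hr : Function.Injective r)
    (hρ : ∀ σ i, σ (r i) = r (ρ σ i)) {s : Finset (Fin 4)} (hs : s.card = 2)
    (hle : adjoin F (Set.range (nodal s r).coeff) ≤ fixedField (pairStabilizer.comap ρ)) :
    adjoin F (Set.range (nodal s r).coeff) = fixedField (pairStabilizer.comap ρ) := by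
  have hK : pairStabilizer ≤ stabilizer (Perm (Fin 4)) s := by
    rw [← Subgroup.comap_le_comap_of_surjective hρ_surj,
      ← fixingSubgroup_fixedField (pairStabilizer.comap ρ)]
    exact (fixingSubgroup_le hle).trans (fixingSubgroup_adjoin_coeff_nodal_le ρ hr hρ s)
  have hstab := stabilizer_eq_pairStabilizer_of_swap_smul hs
    (mem_stabilizer_iff.mp (hK (mem_stabilizer_iff.mpr (by decide))))
    (mem_stabilizer_iff.mp (hK (mem_stabilizer_iff.mpr (by decide))))
  rw [adjoin_coeff_nodal_eq_fixedField ρ hr hρ s, hstab]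

theorem exists_irreducible_quadratics_map_mul_eq_nodal_univ (hρ_surj : Function.Surjective ρ)
    (hr : Function.Injective r) (hρ : ∀ σ i, σ (r i) = r (ρ σ i)) :
    ∃ q₁ q₂ : (fixedField (pairStabilizer.comap ρ))[X], q₁.Monic ∧ q₂.Monic ∧
      Irreducible q₁ ∧ Irreducible q₂ ∧ q₁.natDegree = 2 ∧ q₂.natDegree = 2 ∧
      (q₁ * q₂).map (algebraMap _ N) = nodal Finset.univ r := by
  obtain ⟨q₁, hm₁, hirr₁, hdeg₁, hmap₁⟩ :=
    exists_irreducible_map_eq_nodal hρ_surj hr hρ (s := {0, 1}) (by decide) rfl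
  obtain ⟨q₂, hm₂, hirr₂, hdeg₂, hmap₂⟩ := exists_irreducible_map_eq_nodal hρ_surj hr hρ
    (s := {2, 3}) (by decide) (stabilizer_eq_pairStabilizer_of_swap_smul (by decide) (by decide)
      (by decide))
  refine ⟨q₁, q₂, hm₁, hm₂, hirr₁, hirr₂, hdeg₁, hdeg₂, ?_⟩
  rw [Polynomial.map_mul, hmap₁, hmap₂, nodal_eq, nodal_eq, nodal_eq,
    ← Finset.prod_union (by decide)]
  rfl

theorem adjoin_coeff_map_eq_fixedField_of_dvd_nodal_univ [FiniteDimensional F N] [IsGalois F N]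
    (hρ_surj : Function.Surjective ρ) (hr : Function.Injective r)
    (hρ : ∀ σ i, σ (r i) = r (ρ σ i)) {h : (fixedField (pairStabilizer.comap ρ))[X]}
    (hmonic : h.Monic) (hdeg : h.natDegree = 2)
    (hdvd : h.map (algebraMap _ N) ∣ nodal Finset.univ r) :
    adjoin F (Set.range (h.map (algebraMap _ N)).coeff) = fixedField (pairStabilizer.comap ρ) := by
  obtain ⟨s, -, hs⟩ := exists_subset_eq_nodal_of_dvd (hmonic.map _) hr.injOn hdvd
  have hcard : s.card = 2 := by rw [← natDegree_nodal (v := r), ← hs, natDegree_map, hdeg]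
  have hle : adjoin F (Set.range (h.map (algebraMap _ N)).coeff) ≤
      fixedField (pairStabilizer.comap ρ) := by
    rw [adjoin_le_iff]
    rintro _ ⟨n, rfl⟩
    rw [coeff_map]
    exact (h.coeff n).2
  rw [hs] at hle ⊢
  exact adjoin_coeff_nodal_eq_fixedField_comap_pairStabilizer hρ_surj hr hρ hcard hle

end QuarticGalois

/-- Let `g ∈ ℚ[T]` be irreducible of degree `4` with Galois group `S₄`
acting on its `4` roots, let `N` be its splitting field, and let `M ⊆ N` be the fixed
field of `H = ⟨(1 2), (3 4)⟩ ≤ S₄` (so `[M : ℚ] = 6`).  Then `g` factors over `M` as a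
product of two irreducible quadratics, and neither quadratic factor `h` satisfies
`deg g = [L : ℚ] · deg h` where `L` is generated by the coefficients of `h`; indeed, the
coefficients of each quadratic factor generate `M` itself. -/
theorem s4_example_no_irreducible_normic_factor
    (g : Polynomial ℚ) (hmonic : g.Monic) (hirr : Irreducible g) (hdeg : g.natDegree = 4)
    (N : Type*) [Field N] [Algebra ℚ N] [IsSplittingField ℚ N g] [FiniteDimensional ℚ N]
    (e : (N ≃ₐ[ℚ] N) ≃* Equiv.Perm (Fin 4))
    (r : Fin 4 → N) (hroot : ∀ i, Polynomial.aeval (r i) g = 0)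
    (hinj : Function.Injective r)
    (hcompat : ∀ (σ : N ≃ₐ[ℚ] N) (i : Fin 4), σ (r i) = r (e σ i)) :
    ∀ M : IntermediateField ℚ N,
      M = IntermediateField.fixedField
        (Subgroup.comap e.toMonoidHom
          (Subgroup.closure {Equiv.swap (0 : Fin 4) 1, Equiv.swap (2 : Fin 4) 3})) →
      (Module.finrank ℚ M = 6) ∧
      (∃ h₁ h₂ : Polynomial M, h₁.Monic ∧ h₂.Monic ∧ Irreducible h₁ ∧ Irreducible h₂ ∧
        h₁.natDegree = 2 ∧ h₂.natDegree = 2 ∧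
        g.map (algebraMap ℚ M) = h₁ * h₂) ∧
      (∀ h : Polynomial M, h.Monic → h ∣ g.map (algebraMap ℚ M) → h.natDegree = 2 →
        IntermediateField.adjoin ℚ (Set.range h.coeff) = (⊤ : IntermediateField ℚ M) ∧
        g.natDegree ≠
          Module.finrank ℚ (IntermediateField.adjoin ℚ (Set.range h.coeff)) *
            h.natDegree) := by
  intro M hM
  have : IsGalois ℚ N := IsGalois.of_separable_splitting_field hirr.separable
  have hsurj : Function.Surjective e.toMonoidHom := e.surjective
  have hg : g.map (algebraMap ℚ N) = nodal Finset.univ r :=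
    eq_nodal_univ_of_isRoot (hmonic.map _) (by rw [natDegree_map, hdeg, Fintype.card_fin]) hinj
      fun i => by rw [IsRoot, eval_map, ← aeval_def, hroot]
  rw [closure_swap_swap_eq_pairStabilizer] at hM
  subst hM
  have hrank : Module.finrank ℚ (fixedField (pairStabilizer.comap e.toMonoidHom)) = 6 := by
    rw [finrank_eq_fixingSubgroup_index, fixingSubgroup_fixedField,
      Subgroup.index_comap_of_surjective _ hsurj, index_pairStabilizer]
  refine ⟨hrank, ?_, fun h hh_monic hh_dvd hh_deg => ?_⟩
  · obtain ⟨q₁, q₂, hm₁, hm₂, hirr₁, hirr₂, hdeg₁, hdeg₂, hmul⟩ :=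
      exists_irreducible_quadratics_map_mul_eq_nodal_univ hsurj hinj hcompat
    refine ⟨q₁, q₂, hm₁, hm₂, hirr₁, hirr₂, hdeg₁, hdeg₂,
      map_injective _ (algebraMap _ N).injective ?_⟩
    rw [Polynomial.map_map, ← IsScalarTower.algebraMap_eq, hg, hmul]
  have hdvdN : h.map (algebraMap _ N) ∣ nodal Finset.univ r := by
    simpa only [Polynomial.map_map, ← IsScalarTower.algebraMap_eq, hg] using
      Polynomial.map_dvd (algebraMap _ N) hh_dvd
  -- The statement puts `DivisionRing.toRatAlgebra` on `M` rather than `M.algebra'`; they agree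
  -- because `ℚ`-algebra and `ℚ`-module structures are unique.
  have htop : adjoin ℚ (Set.range h.coeff) = ⊤ := by
    have hN := adjoin_coeff_map_eq_fixedField_of_dvd_nodal_univ hsurj hinj hcompat hh_monic
      hh_deg hdvdN
    convert (adjoin_range_coeff_eq_top_iff _ h).mpr hN <;> exact Subsingleton.elim _ _
  have h6 : Module.finrank ℚ (adjoin ℚ (Set.range h.coeff)) = 6 := by
    rw [htop, finrank_top']
    convert hrank using 2 <;> first | rfl | exact Subsingleton.elim _ _
  refine ⟨htop, ?_⟩
  rw [h6, hdeg, hh_deg]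
  decide
end
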